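/- arXiv:2411.05773 — 2 statements merged into one kernel-verified Lean document; each statement's English description precedes it below -/
import Mathlib

section
/- Let 0 ≤ α < 2, set κ = (2−α)/2 and ν = |1−α|/(2−α), and let j > 0. Suppose y : (0,∞) → ℝ is twice differentiable and satisfies Bessel's differential equation of order ν, i.e. t²·y''(t) + t·y'(t) + (t² − ν²)·y(t) = 0 for all t > 0. Then the function u(x) := x^{(1−α)/2}·y(j·x^κ) is an eigenfunction of the degenerate diffusion operator: for every x ∈ (0,1), the function x ↦ x^α·u'(x) is differentiable at x and its derivative equals −κ²·j²·u(x). -/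
/-!
Write `β = (1 - α) / 2`, `κ = (2 - α) / 2 = β + 1 / 2` and `t = j x^κ`. The flux of
`u(x) = x^β y(t)` is `x^α u'(x) = x^(-β) w(t)` with `w(t) = β y(t) + κ t y'(t)`, and its
derivative is `x^(-β-1) (κ t w'(t) - β w(t))`. Bessel's equation together with `ν² κ² = β²` reduces
`κ t w'(t) - β w(t)` to `-κ² t² y(t)`, and `x^(-β-1) t² = j² x^β`.
-/

open Real Set

theorem hasDerivAt_rpow_mul_comp_const_mul_rpow {p κ j x f' : ℝ} {f : ℝ → ℝ} (hx : 0 < x)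
    (hf : HasDerivAt f f' (j * x ^ κ)) :
    HasDerivAt (fun s => s ^ p * f (j * s ^ κ))
      (x ^ (p - 1) * (p * f (j * x ^ κ) + κ * (j * x ^ κ) * f')) x := by
  have hinner : HasDerivAt (fun s => j * s ^ κ) (j * (κ * x ^ (κ - 1))) x :=
    (hasDerivAt_rpow_const (Or.inl hx.ne')).const_mul j
  refine ((hasDerivAt_rpow_const (Or.inl hx.ne')).mul (hf.comp x hinner)).congr_deriv ?_
  rw [rpow_sub_one hx.ne', rpow_sub_one hx.ne']
  simp only [Function.comp_apply]
  field_simp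

noncomputable def besselFlux (β κ : ℝ) (y : ℝ → ℝ) (t : ℝ) : ℝ := β * y t + κ * t * deriv y t

theorem hasDerivAt_besselFlux {β κ t : ℝ} {y : ℝ → ℝ} (hy : DifferentiableAt ℝ y t)
    (hy' : DifferentiableAt ℝ (deriv y) t) :
    HasDerivAt (besselFlux β κ y)
      (β * deriv y t + κ * (deriv y t + t * deriv (deriv y) t)) t := by
  refine ((hy.hasDerivAt.const_mul β).add
    (((hasDerivAt_id' t).const_mul κ).mul hy'.hasDerivAt)).congr_deriv ?_
  ring

theorem neg_mul_besselFlux_add_mul_deriv_eq_of_bessel {β κ ν t : ℝ} {y : ℝ → ℝ}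
    (hν : ν ^ 2 * κ ^ 2 = β ^ 2)
    (hBessel : t ^ 2 * deriv (deriv y) t + t * deriv y t + (t ^ 2 - ν ^ 2) * y t = 0) :
    -β * besselFlux β κ y t + κ * t * (β * deriv y t + κ * (deriv y t + t * deriv (deriv y) t))
      = -(κ ^ 2 * t ^ 2 * y t) := by
  unfold besselFlux
  linear_combination κ ^ 2 * hBessel + y t * hν

section
variable {α j : ℝ} {y : ℝ → ℝ}

theorem rpow_mul_deriv_eq_besselFlux {s : ℝ} (hs : 0 < s)
    (hy : DifferentiableAt ℝ y (j * s ^ ((2 - α) / 2))) :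
    s ^ α * deriv (fun z => z ^ ((1 - α) / 2) * y (j * z ^ ((2 - α) / 2))) s
      = s ^ (-((1 - α) / 2)) *
          besselFlux ((1 - α) / 2) ((2 - α) / 2) y (j * s ^ ((2 - α) / 2)) := by
  rw [(hasDerivAt_rpow_mul_comp_const_mul_rpow hs hy.hasDerivAt).deriv, ← mul_assoc,
    ← rpow_add hs]
  unfold besselFlux
  ring_nf

theorem hasDerivAt_rpow_mul_deriv_of_bessel (ν : ℝ) (hj : 0 < j)
    (hν : ν ^ 2 * ((2 - α) / 2) ^ 2 = ((1 - α) / 2) ^ 2)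
    (hy : ∀ t, 0 < t → DifferentiableAt ℝ y t)
    (hy' : ∀ t, 0 < t → DifferentiableAt ℝ (deriv y) t)
    (hBessel : ∀ t, 0 < t →
      t ^ 2 * deriv (deriv y) t + t * deriv y t + (t ^ 2 - ν ^ 2) * y t = 0)
    {x : ℝ} (hx : 0 < x) :
    HasDerivAt (fun s => s ^ α *
        deriv (fun z => z ^ ((1 - α) / 2) * y (j * z ^ ((2 - α) / 2))) s)
      (-(((2 - α) / 2) ^ 2 * j ^ 2) * (x ^ ((1 - α) / 2) * y (j * x ^ ((2 - α) / 2)))) x := by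
  set β := (1 - α) / 2
  set κ := (2 - α) / 2
  have ht : ∀ s, 0 < s → 0 < j * s ^ κ := fun s hs => mul_pos hj (rpow_pos_of_pos hs κ)
  have hflux : (fun s => s ^ α * deriv (fun z => z ^ β * y (j * z ^ κ)) s)
      =ᶠ[nhds x] fun s => s ^ (-β) * besselFlux β κ y (j * s ^ κ) := by
    filter_upwards [Ioi_mem_nhds hx] with s hs
    exact rpow_mul_deriv_eq_besselFlux hs (hy _ (ht s hs))
  have hderiv := hasDerivAt_rpow_mul_comp_const_mul_rpow (p := -β) hx
    (hasDerivAt_besselFlux (β := β) (κ := κ) (hy _ (ht x hx)) (hy' _ (ht x hx)))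
  refine (hderiv.congr_of_eventuallyEq hflux).congr_deriv ?_
  rw [neg_mul_besselFlux_add_mul_deriv_eq_of_bessel hν (hBessel _ (ht x hx))]
  have hexp : x ^ (-β - 1) * (x ^ κ) ^ 2 = x ^ β := by
    rw [← rpow_natCast, ← rpow_mul hx.le, ← rpow_add hx]
    congr 1
    simp only [β, κ]
    ring
  linear_combination (-(κ ^ 2 * j ^ 2 * y (j * x ^ κ))) * hexp

end

theorem degenerate_eigenfunction_from_bessel_general
    (α : ℝ) (hα2 : α < 2) (j : ℝ) (hj : 0 < j)
    (y : ℝ → ℝ)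
    (hy : ∀ t : ℝ, 0 < t → DifferentiableAt ℝ y t)
    (hy' : ∀ t : ℝ, 0 < t → DifferentiableAt ℝ (deriv y) t)
    (hBessel : ∀ t : ℝ, 0 < t →
      t ^ 2 * deriv (deriv y) t + t * deriv y t
        + (t ^ 2 - (|1 - α| / (2 - α)) ^ 2) * y t = 0) :
    ∀ x ∈ Set.Ioo (0 : ℝ) 1,
      HasDerivAt
        (fun s : ℝ => s ^ α *
          deriv (fun z : ℝ => z ^ ((1 - α) / 2) * y (j * z ^ ((2 - α) / 2))) s)
        (-(((2 - α) / 2) ^ 2 * j ^ 2) *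
          (x ^ ((1 - α) / 2) * y (j * x ^ ((2 - α) / 2)))) x := by
  rintro x ⟨hx, -⟩
  have hν : (|1 - α| / (2 - α)) ^ 2 * ((2 - α) / 2) ^ 2 = ((1 - α) / 2) ^ 2 := by
    have : 2 - α ≠ 0 := by linarith
    rw [div_pow, sq_abs]
    field_simp
  exact hasDerivAt_rpow_mul_deriv_of_bessel _ hj hν hy hy' hBessel hx

/-- If `y` is twice differentiable on `(0,∞)` and solves Bessel's equation of
order `ν = |1-α|/(2-α)`, then `u(x) = x^((1-α)/2) · y(j·x^κ)` with `κ = (2-α)/2` satisfies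
`(x^α u')' = -κ²j²·u` on `(0,1)`. -/
theorem degenerate_eigenfunction_from_bessel
    (α : ℝ) (hα0 : 0 ≤ α) (hα2 : α < 2) (j : ℝ) (hj : 0 < j)
    (y : ℝ → ℝ)
    (hy : ∀ t : ℝ, 0 < t → DifferentiableAt ℝ y t)
    (hy' : ∀ t : ℝ, 0 < t → DifferentiableAt ℝ (deriv y) t)
    (hBessel : ∀ t : ℝ, 0 < t →
      t ^ 2 * deriv (deriv y) t + t * deriv y t
        + (t ^ 2 - (|1 - α| / (2 - α)) ^ 2) * y t = 0) :
    ∀ x ∈ Set.Ioo (0 : ℝ) 1,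
      HasDerivAt
        (fun s : ℝ => s ^ α *
          deriv (fun z : ℝ => z ^ ((1 - α) / 2) * y (j * z ^ ((2 - α) / 2))) s)
        (-(((2 - α) / 2) ^ 2 * j ^ 2) *
          (x ^ ((1 - α) / 2) * y (j * x ^ ((2 - α) / 2)))) x :=
  degenerate_eigenfunction_from_bessel_general α hα2 j hj y hy hy' hBessel
end

section
/- Let ν be a real number with ν > −1, and let J_ν : (0,∞) → ℝ be the Bessel function of the first kind of order ν, defined by the convergent series J_ν(x) = Σ_{m≥0} (−1)^m / (m!·Γ(1+ν+m)) · (x/2)^{2m+ν}. Suppose j : ℕ≥1 → (0,∞) is a strictly increasing sequence such that J_ν(j_n) = 0 for every n ≥ 1 and such that every x > 0 with J_ν(x) = 0 equals j_n for some n ≥ 1 (i.e. (j_n) enumerates all positive zeros of J_ν in increasing order). Then: (i) the difference sequence (j_{n+1} − j_n)_{n≥1} converges to π as n → ∞; (ii) the sequence (j_{n+1} − j_n)_{n≥1} is strictly decreasing if |ν| > 1/2, strictly increasing if |ν| < 1/2, and constant if |ν| = 1/2. -/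
open Real Filter Set Topology

/-!
Write `J_ν(x) = (x/2)^ν G(x)` with the entire function
`G(x) = ∑ₘ (-1)^m (x/2)^{2m} / (m! Γ(1+ν+m))`. Termwise differentiation gives
`G'' + ((2ν+1)/x) G' + G = 0`, so `u(x) = x^{ν+1/2} G(x)`, which has the same positive zeros as
`J_ν`, solves `u'' + q u = 0` with `q(x) = 1 + (1/4 - ν²)/x²`.

Sturm comparison with `sin (π (x - a) / L)`, a solution for the constant potential `(π/L)²`,
shows that a gap `j_{n+1} - j_n` exceeds `L` where `q < (π/L)²` and is below `L` where
`q > (π/L)²`; as `q → 1` the gaps tend to `π`. Comparing `u` with its translate `u (x - δ)`,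
`δ = j_{n+1} - j_n`, whose potential `q (x - δ)` is smaller than `q` when `q` increases
(`|ν| > 1/2`) and larger when `q` decreases (`|ν| < 1/2`), makes the gaps strictly monotone.
For `|ν| = 1/2`, `q = 1` and `u` is a multiple of `sin (x - j_n)`.
-/

noncomputable def powSum (a : ℕ → ℝ) (t : ℝ) : ℝ := ∑' m, a m * t ^ m

def derivCoeff (a : ℕ → ℝ) (m : ℕ) : ℝ := (m + 1) * a (m + 1)

def IsEntireCoeff (a : ℕ → ℝ) : Prop := ∀ t : ℝ, Summable fun m => a m * t ^ m

theorem isEntireCoeff_of_tendsto_ratio {a : ℕ → ℝ} (hne : ∀ m, a m ≠ 0)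
    (h : Tendsto (fun m => |a (m + 1)| / |a m|) atTop (𝓝 0)) : IsEntireCoeff a := by
  have hr : (FormalMultilinearSeries.ofScalars ℝ a).radius = ⊤ :=
    FormalMultilinearSeries.ofScalars_radius_eq_top_of_tendsto ℝ a (.of_forall hne) h
  intro t
  refine .of_norm_bounded ((FormalMultilinearSeries.ofScalars ℝ a).summable_norm_mul_pow
    (r := ‖t‖₊) (hr ▸ ENNReal.coe_lt_top)) fun m => ?_
  simp [norm_mul, norm_pow]

namespace IsEntireCoeff

variable {a : ℕ → ℝ}

theorem hasSum (ha : IsEntireCoeff a) (t : ℝ) : HasSum (fun m => a m * t ^ m) (powSum a t) :=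
  (ha t).hasSum

theorem derivCoeff (ha : IsEntireCoeff a) : IsEntireCoeff (derivCoeff a) := by
  intro t
  set R := 2 * (|t| + 1)
  refine .of_norm_bounded ((summable_nat_add_iff 1).2 (ha R)).abs fun m => ?_
  have hm : (m + 1 : ℝ) ≤ 2 ^ (m + 1) := by exact_mod_cast (Nat.lt_two_pow_self).le
  have ht : |t| ^ m ≤ (|t| + 1) ^ (m + 1) := calc
    |t| ^ m ≤ (|t| + 1) ^ m := by gcongr; linarith
    _ ≤ (|t| + 1) ^ (m + 1) := pow_le_pow_right₀ (by linarith [abs_nonneg t]) m.le_succ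
  calc ‖_root_.derivCoeff a m * t ^ m‖ = |a (m + 1)| * ((m + 1) * |t| ^ m) := by
        simp only [_root_.derivCoeff, norm_mul, norm_pow, Real.norm_eq_abs]
        rw [abs_of_nonneg (by positivity : (0 : ℝ) ≤ m + 1)]; ring
    _ ≤ |a (m + 1)| * (2 ^ (m + 1) * (|t| + 1) ^ (m + 1)) := by gcongr
    _ = |a (m + 1) * R ^ (m + 1)| := by
        rw [abs_mul, abs_pow, abs_of_pos (by positivity : 0 < R), mul_pow]

theorem hasDerivAt_powSum (ha : IsEntireCoeff a) (t : ℝ) :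
    HasDerivAt (powSum a) (powSum (_root_.derivCoeff a) t) t := by
  have hshift : powSum a = fun x => a 0 + ∑' m, a (m + 1) * x ^ (m + 1) :=
    funext fun x => by rw [powSum, (ha x).tsum_eq_zero_add]; simp
  set R := |t| + 1
  have hR : 0 < R := by positivity
  have hbound : Summable fun m => |_root_.derivCoeff a m| * R ^ m := by
    simpa [abs_mul, abs_pow, abs_of_pos hR] using (ha.derivCoeff R).abs
  have ht : t ∈ Ioo (-R) R := abs_lt.1 (by linarith)
  rw [hshift]
  refine (hasDerivAt_tsum_of_isPreconnected hbound isOpen_Ioo isPreconnected_Ioo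
    (g := fun m x => a (m + 1) * x ^ (m + 1)) (g' := fun m x => _root_.derivCoeff a m * x ^ m)
    (fun m x _ => ?_) (fun m x hx => ?_) ht ((summable_nat_add_iff 1).2 (ha t)) ht).const_add (a 0)
  · refine ((hasDerivAt_pow (m + 1) x).const_mul (a (m + 1))).congr_deriv ?_
    simp only [_root_.derivCoeff, Nat.add_sub_cancel]; push_cast; ring
  · rw [norm_mul, norm_pow, Real.norm_eq_abs, Real.norm_eq_abs]
    gcongr
    exact (abs_lt.2 hx).le

theorem hasSum_natCast_mul (ha : IsEntireCoeff a) (t : ℝ) :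
    HasSum (fun m => m * a m * t ^ m) (t * powSum (_root_.derivCoeff a) t) := by
  have h : HasSum (fun m => ((m + 1 : ℕ) : ℝ) * a (m + 1) * t ^ (m + 1))
      (t * powSum (_root_.derivCoeff a) t) :=
    ((ha.derivCoeff.hasSum t).mul_left t).congr_fun fun m => by
      simp only [_root_.derivCoeff]; push_cast; ring
  simpa using HasSum.zero_add (f := fun m : ℕ => (m : ℝ) * a m * t ^ m) h

end IsEntireCoeff

noncomputable def besselCoeff (ν : ℝ) (m : ℕ) : ℝ :=
  (-1 : ℝ) ^ m / (m.factorial * Gamma (1 + ν + m))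

section BesselCoeff

variable {ν : ℝ}

theorem besselCoeff_ne_zero (hν : -1 < ν) (m : ℕ) : besselCoeff ν m ≠ 0 := by
  have := Gamma_pos_of_pos (by linarith [Nat.cast_nonneg (α := ℝ) m] : 0 < 1 + ν + m)
  unfold besselCoeff
  positivity

theorem besselCoeff_succ (hν : -1 < ν) (m : ℕ) :
    (m + 1) * (m + 1 + ν) * besselCoeff ν (m + 1) = -besselCoeff ν m := by
  have hpos : 0 < 1 + ν + m := by linarith [Nat.cast_nonneg (α := ℝ) m]
  have hΓ : Gamma (1 + ν + (m + 1 : ℕ)) = (1 + ν + m) * Gamma (1 + ν + m) := by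
    rw [Nat.cast_succ, ← add_assoc, Gamma_add_one hpos.ne']
  have := Gamma_pos_of_pos hpos
  simp only [besselCoeff, hΓ, Nat.factorial_succ, Nat.cast_mul, pow_succ]
  push_cast
  field_simp
  ring

theorem isEntireCoeff_besselCoeff (hν : -1 < ν) : IsEntireCoeff (besselCoeff ν) := by
  refine isEntireCoeff_of_tendsto_ratio (besselCoeff_ne_zero hν) ?_
  have hratio (m : ℕ) :
      |besselCoeff ν (m + 1)| / |besselCoeff ν m| = ((m + 1) * (m + 1 + ν))⁻¹ := by
    have hm : 0 < (m + 1 : ℝ) * (m + 1 + ν) := by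
      have := Nat.cast_nonneg (α := ℝ) m
      exact mul_pos (by linarith) (by linarith)
    have h := congrArg abs (besselCoeff_succ hν m)
    rw [abs_mul, abs_neg, abs_of_pos hm] at h
    rw [← h, div_mul_cancel_right₀ (abs_pos.2 (besselCoeff_ne_zero hν (m + 1))).ne']
  simp only [hratio]
  refine tendsto_inv_atTop_zero.comp
    (tendsto_atTop_mono (fun m => ?_) tendsto_natCast_atTop_atTop)
  nlinarith [(m.cast_nonneg : (0 : ℝ) ≤ m)]

theorem besselCoeff_ode (hν : -1 < ν) (s : ℝ) :
    s * powSum (derivCoeff (derivCoeff (besselCoeff ν))) s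
      + (1 + ν) * powSum (derivCoeff (besselCoeff ν)) s + powSum (besselCoeff ν) s = 0 := by
  have ha := isEntireCoeff_besselCoeff hν
  have h := ((ha.derivCoeff.hasSum_natCast_mul s).add
    ((ha.derivCoeff.hasSum s).mul_left (1 + ν))).add (ha.hasSum s)
  have hterm : ∀ m : ℕ, m * derivCoeff (besselCoeff ν) m * s ^ m
      + (1 + ν) * (derivCoeff (besselCoeff ν) m * s ^ m) + besselCoeff ν m * s ^ m = 0 := by
    intro m
    simp only [derivCoeff]
    linear_combination s ^ m * besselCoeff_succ hν m
  simp only [hterm] at h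
  exact h.unique hasSum_zero

end BesselCoeff

/-- The entire function `(x / 2) ^ (-ν) * J_ν x`. -/
noncomputable def besselEntire (ν x : ℝ) : ℝ := powSum (besselCoeff ν) ((x / 2) ^ 2)

noncomputable def besselEntireDeriv (ν x : ℝ) : ℝ :=
  x / 2 * powSum (derivCoeff (besselCoeff ν)) ((x / 2) ^ 2)

theorem hasDerivAt_half_sq (x : ℝ) : HasDerivAt (fun x : ℝ => (x / 2) ^ 2) (x / 2) x := by
  refine (((hasDerivAt_id x).div_const 2).fun_pow 2).congr_deriv ?_
  simp only [id]
  ring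

section BesselEntire

variable {ν : ℝ}

theorem hasDerivAt_besselEntire (hν : -1 < ν) (x : ℝ) :
    HasDerivAt (besselEntire ν) (besselEntireDeriv ν x) x := by
  refine (((isEntireCoeff_besselCoeff hν).hasDerivAt_powSum _).comp x
    (hasDerivAt_half_sq x)).congr_deriv ?_
  rw [besselEntireDeriv, mul_comm]

theorem hasDerivAt_besselEntireDeriv (hν : -1 < ν) {x : ℝ} (hx : x ≠ 0) :
    HasDerivAt (besselEntireDeriv ν)
      (-(2 * (ν + 1 / 2) / x * besselEntireDeriv ν x + besselEntire ν x)) x := by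
  have ha := isEntireCoeff_besselCoeff hν
  have h : HasDerivAt (besselEntireDeriv ν)
      (1 / 2 * powSum (derivCoeff (besselCoeff ν)) ((x / 2) ^ 2)
        + x / 2 * (powSum (derivCoeff (derivCoeff (besselCoeff ν))) ((x / 2) ^ 2) * (x / 2))) x :=
    ((hasDerivAt_id x).div_const 2).mul (ha.derivCoeff.hasDerivAt_powSum _ |>.comp x
      (hasDerivAt_half_sq x))
  refine h.congr_deriv ?_
  rw [besselEntireDeriv, besselEntire,
    show ∀ g, 2 * (ν + 1 / 2) / x * (x / 2 * g) = (ν + 1 / 2) * g from fun g => by field_simp]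
  linear_combination besselCoeff_ode hν ((x / 2) ^ 2)

theorem tsum_besselCoeff_mul_rpow (ν : ℝ) {x : ℝ} (hx : 0 < x) :
    ∑' m : ℕ, besselCoeff ν m * (x / 2) ^ (2 * (m : ℝ) + ν)
      = (x / 2) ^ ν * besselEntire ν x := by
  rw [besselEntire, powSum, ← tsum_mul_left]
  congr 1 with m
  rw [rpow_add (by positivity), rpow_mul (by positivity), rpow_two, rpow_natCast]
  ring

end BesselEntire

def IsSturmSolution (q : ℝ → ℝ) (s : Set ℝ) (u u' : ℝ → ℝ) : Prop :=
  ∀ x ∈ s, HasDerivAt u (u' x) x ∧ HasDerivAt u' (-(q x * u x)) x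

namespace IsSturmSolution

variable {q : ℝ → ℝ} {s t : Set ℝ} {u u' : ℝ → ℝ}

theorem mono (hu : IsSturmSolution q s u u') (hts : t ⊆ s) : IsSturmSolution q t u u' :=
  fun x hx => hu x (hts hx)

theorem continuousOn (hu : IsSturmSolution q s u u') : ContinuousOn u s :=
  fun x hx => (hu x hx).1.continuousAt.continuousWithinAt

theorem neg (hu : IsSturmSolution q s u u') :
    IsSturmSolution q s (fun x => -u x) (fun x => -u' x) :=
  fun x hx => ⟨(hu x hx).1.neg, (hu x hx).2.neg.congr_deriv (by ring)⟩

theorem const_mul (hu : IsSturmSolution q s u u') (c : ℝ) :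
    IsSturmSolution q s (fun x => c * u x) (fun x => c * u' x) :=
  fun x hx => ⟨(hu x hx).1.const_mul c, ((hu x hx).2.const_mul c).congr_deriv (by ring)⟩

theorem sub {v v' : ℝ → ℝ} (hu : IsSturmSolution q s u u') (hv : IsSturmSolution q s v v') :
    IsSturmSolution q s (fun x => u x - v x) (fun x => u' x - v' x) :=
  fun x hx =>
    ⟨(hu x hx).1.sub (hv x hx).1, ((hu x hx).2.sub (hv x hx).2).congr_deriv (by ring)⟩

theorem comp_sub (hu : IsSturmSolution q s u u') (δ : ℝ) :
    IsSturmSolution (fun x => q (x - δ)) ((· - δ) ⁻¹' s) (fun x => u (x - δ))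
      (fun x => u' (x - δ)) :=
  fun x hx => ⟨(hu _ hx).1.comp_sub_const x δ, (hu _ hx).2.comp_sub_const x δ⟩

end IsSturmSolution

theorem isSturmSolution_sin (ω a : ℝ) :
    IsSturmSolution (fun _ => ω ^ 2) univ (fun x => sin (ω * (x - a)))
      (fun x => ω * cos (ω * (x - a))) := by
  intro x _
  have h : HasDerivAt (fun x => ω * (x - a)) ω x := by
    simpa using ((hasDerivAt_id x).sub_const a).const_mul ω
  exact ⟨h.sin.congr_deriv (mul_comm _ _), (h.cos.const_mul ω).congr_deriv (by ring)⟩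

theorem sin_pi_div_mul_sub_pos {L a x : ℝ} (hL : 0 < L) (hx : x ∈ Ioo a (a + L)) :
    0 < sin (π / L * (x - a)) := by
  apply sin_pos_of_pos_of_lt_pi (mul_pos (by positivity) (by linarith [hx.1]))
  calc π / L * (x - a) < π / L * L := by gcongr; linarith [hx.2]
    _ = π := div_mul_cancel₀ π hL.ne'

theorem IsPreconnected.pos_or_neg_of_ne_zero {f : ℝ → ℝ} {s : Set ℝ} (hs : IsPreconnected s)
    (hf : ContinuousOn f s) (h0 : ∀ x ∈ s, f x ≠ 0) :
    (∀ x ∈ s, 0 < f x) ∨ ∀ x ∈ s, f x < 0 := by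
  by_contra! h
  obtain ⟨⟨x, hx, hfx⟩, ⟨y, hy, hfy⟩⟩ := h
  obtain ⟨z, hz, hfz⟩ := hs.intermediate_value hx hy hf ⟨hfx, hfy⟩
  exact h0 z hz hfz

theorem HasDerivAt.nonneg_of_eq_zero_of_pos {f : ℝ → ℝ} {f' a b : ℝ}
    (hf : HasDerivAt f f' a) (hab : a < b) (hfa : f a = 0) (hpos : ∀ x ∈ Ioo a b, 0 < f x) :
    0 ≤ f' := by
  refine ge_of_tendsto hf.tendsto_slope_zero_right ?_
  filter_upwards [Ioo_mem_nhdsGT (sub_pos.2 hab)] with t ht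
  rw [hfa, sub_zero, smul_eq_mul]
  exact (mul_pos (inv_pos.2 ht.1) (hpos _ ⟨by linarith [ht.1], by linarith [ht.2]⟩)).le

theorem HasDerivAt.nonpos_of_eq_zero_of_pos {f : ℝ → ℝ} {f' a b : ℝ}
    (hf : HasDerivAt f f' b) (hab : a < b) (hfb : f b = 0) (hpos : ∀ x ∈ Ioo a b, 0 < f x) :
    f' ≤ 0 := by
  refine le_of_tendsto hf.tendsto_slope_zero_left ?_
  filter_upwards [Ioo_mem_nhdsLT (sub_neg.2 hab)] with t ht
  rw [hfb, sub_zero, smul_eq_mul]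
  exact mul_nonpos_of_nonpos_of_nonneg (inv_nonpos.2 ht.2.le)
    (hpos _ ⟨by linarith [ht.1], by linarith [ht.2]⟩).le

section Sturm

variable {p P u u' v v' : ℝ → ℝ} {a b : ℝ}

theorem sturm_exists_nonpos (hab : a < b) (hu : IsSturmSolution p (Icc a b) u u')
    (hv : IsSturmSolution P (Icc a b) v v') (hpP : ∀ x ∈ Ioo a b, p x < P x)
    (hua : u a = 0) (hub : u b = 0) (hu_pos : ∀ x ∈ Ioo a b, 0 < u x) :
    ∃ x ∈ Ioo a b, v x ≤ 0 := by
  by_contra! hv_pos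
  have ha : a ∈ Icc a b := left_mem_Icc.2 hab.le
  have hb : b ∈ Icc a b := right_mem_Icc.2 hab.le
  have hcl : ∀ x ∈ Icc a b, 0 ≤ v x := fun x hx =>
    ContinuousWithinAt.closure_le (closure_Ioo hab.ne ▸ hx) continuousWithinAt_const
      (hv x hx).1.continuousAt.continuousWithinAt fun y hy => (hv_pos y hy).le
  -- The Wronskian `u v' - u' v` has derivative `(p - P) u v < 0`, yet is `≤ 0` at `a`
  -- and `≥ 0` at `b`.
  have hW : ∀ x ∈ Icc a b, HasDerivAt (fun x => u x * v' x - u' x * v x)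
      ((p x - P x) * (u x * v x)) x := fun x hx =>
    (((hu x hx).1.mul (hv x hx).2).sub ((hu x hx).2.mul (hv x hx).1)).congr_deriv (by ring)
  obtain ⟨c, hc, hslope⟩ := exists_hasDerivAt_eq_slope _ _ hab
    (fun x hx => (hW x hx).continuousAt.continuousWithinAt)
    fun x hx => hW x (Ioo_subset_Icc_self hx)
  have hWa : 0 ≤ u' a * v a :=
    mul_nonneg ((hu a ha).1.nonneg_of_eq_zero_of_pos hab hua hu_pos) (hcl a ha)
  have hWb : u' b * v b ≤ 0 :=
    mul_nonpos_of_nonpos_of_nonneg ((hu b hb).1.nonpos_of_eq_zero_of_pos hab hub hu_pos)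
      (hcl b hb)
  have hneg : (p c - P c) * (u c * v c) < 0 :=
    mul_neg_of_neg_of_pos (sub_neg.2 (hpP c hc)) (mul_pos (hu_pos c hc) (hv_pos c hc))
  rw [hslope, hua, hub, div_neg_iff] at hneg
  rcases hneg with ⟨-, _⟩ | ⟨_, -⟩ <;> linarith

theorem sturm_comparison (hab : a < b) (hu : IsSturmSolution p (Icc a b) u u')
    (hv : IsSturmSolution P (Icc a b) v v') (hpP : ∀ x ∈ Ioo a b, p x < P x)
    (hua : u a = 0) (hub : u b = 0) (hu0 : ∀ x ∈ Ioo a b, u x ≠ 0) :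
    ∃ x ∈ Ioo a b, v x = 0 := by
  by_contra! hv0
  have sign {w : ℝ → ℝ} (hw : ContinuousOn w (Icc a b)) (hw0 : ∀ x ∈ Ioo a b, w x ≠ 0) :
      (∀ x ∈ Ioo a b, 0 < w x) ∨ ∀ x ∈ Ioo a b, w x < 0 :=
    isPreconnected_Ioo.pos_or_neg_of_ne_zero (hw.mono Ioo_subset_Icc_self) hw0
  wlog hu_pos : ∀ x ∈ Ioo a b, 0 < u x generalizing u u'
  · have hu_neg := (sign hu.continuousOn hu0).resolve_left hu_pos
    exact this hu.neg (by simp [hua]) (by simp [hub]) (fun x hx => neg_ne_zero.2 (hu0 x hx))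
      fun x hx => neg_pos.2 (hu_neg x hx)
  wlog hv_pos : ∀ x ∈ Ioo a b, 0 < v x generalizing v v'
  · have hv_neg := (sign hv.continuousOn hv0).resolve_left hv_pos
    exact this hv.neg (fun x hx => neg_ne_zero.2 (hv0 x hx))
      fun x hx => neg_pos.2 (hv_neg x hx)
  obtain ⟨x, hx, hvx⟩ := sturm_exists_nonpos hab hu hv hpP hua hub hu_pos
  exact hvx.not_gt (hv_pos x hx)

end Sturm

namespace IsSturmSolution

variable {q u u' : ℝ → ℝ} {a b L : ℝ}

theorem exists_zero_of_pi_div_sq_lt (hL : 0 < L) (hu : IsSturmSolution q (Icc a (a + L)) u u')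
    (hq : ∀ x ∈ Ioo a (a + L), (π / L) ^ 2 < q x) : ∃ x ∈ Ioo a (a + L), u x = 0 :=
  sturm_comparison (by linarith) ((isSturmSolution_sin (π / L) a).mono (subset_univ _)) hu hq
    (by simp) (by rw [add_sub_cancel_left, div_mul_cancel₀ π hL.ne', sin_pi])
    fun x hx => (sin_pi_div_mul_sub_pos hL hx).ne'

theorem lt_sub_of_lt_pi_div_sq (hab : a < b) (hu : IsSturmSolution q (Icc a b) u u')
    (hua : u a = 0) (hub : u b = 0) (hu0 : ∀ x ∈ Ioo a b, u x ≠ 0) (hL : 0 < L)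
    (hq : ∀ x ∈ Ioo a b, q x < (π / L) ^ 2) : L < b - a := by
  by_contra! hle
  obtain ⟨x, hx, hx0⟩ := sturm_comparison hab hu
    ((isSturmSolution_sin (π / L) a).mono (subset_univ _)) hq hua hub hu0
  exact (sin_pi_div_mul_sub_pos hL ⟨hx.1, by linarith [hx.2]⟩).ne' hx0

theorem eq_zero_of_eq_zero_of_deriv_eq_zero {s : Set ℝ}
    (hu : IsSturmSolution (fun _ => 1) s u u') (hs : IsOpen s) (hs' : IsPreconnected s)
    {z : ℝ} (hz : z ∈ s) (huz : u z = 0) (hu'z : u' z = 0) {x : ℝ} (hx : x ∈ s) :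
    u x = 0 := by
  have hE : ∀ y ∈ s, HasDerivAt (fun y => u y ^ 2 + u' y ^ 2) 0 y := fun y hy =>
    (((hu y hy).1.fun_pow 2).add ((hu y hy).2.fun_pow 2)).congr_deriv (by ring)
  have hconst := hs.is_const_of_deriv_eq_zero hs'
    (fun y hy => (hE y hy).differentiableAt.differentiableWithinAt)
    (fun y hy => (hE y hy).deriv) hx hz
  simp only [huz, hu'z] at hconst
  nlinarith [sq_nonneg (u x), sq_nonneg (u' x)]

theorem eq_mul_sin {s : Set ℝ} (hu : IsSturmSolution (fun _ => 1) s u u') (hs : IsOpen s)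
    (hs' : IsPreconnected s) {z : ℝ} (hz : z ∈ s) (huz : u z = 0) {x : ℝ} (hx : x ∈ s) :
    u x = u' z * sin (x - z) := by
  have hsin : IsSturmSolution (fun _ => 1) s (fun x => sin (x - z)) (fun x => cos (x - z)) :=
    fun y _ => by simpa using isSturmSolution_sin 1 z y trivial
  have hw := (hu.sub (hsin.const_mul (u' z))).eq_zero_of_eq_zero_of_deriv_eq_zero hs hs' hz
    (by simp [huz]) (by simp) hx
  exact sub_eq_zero.1 hw

end IsSturmSolution

theorem isSturmSolution_rpow_mul {α : ℝ} {G G' : ℝ → ℝ}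
    (hG : ∀ x > 0, HasDerivAt G (G' x) x)
    (hG' : ∀ x > 0, HasDerivAt G' (-(2 * α / x * G' x + G x)) x) :
    IsSturmSolution (fun x => 1 + α * (1 - α) / x ^ 2) (Ioi 0) (fun x => x ^ α * G x)
      (fun x => α * x ^ (α - 1) * G x + x ^ α * G' x) := by
  intro x hx
  have hx : 0 < x := hx
  have hpow : ∀ β : ℝ, HasDerivAt (fun y => y ^ β) (β * x ^ (β - 1)) x :=
    fun β => hasDerivAt_rpow_const (Or.inl hx.ne')
  refine ⟨(hpow α).mul (hG x hx), ?_⟩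
  refine (((hpow (α - 1)).const_mul α).mul (hG x hx) |>.add
    ((hpow α).mul (hG' x hx))).congr_deriv ?_
  simp only [rpow_sub hx, rpow_one]
  field_simp
  ring

section Potential

variable {κ : ℝ}

theorem tendsto_one_add_div_sq : Tendsto (fun x : ℝ => 1 + κ / x ^ 2) atTop (𝓝 1) := by
  have h : Tendsto (fun x : ℝ => κ / x ^ 2) atTop (𝓝 0) :=
    tendsto_const_nhds.div_atTop (tendsto_pow_atTop two_ne_zero)
  simpa using h.const_add 1

theorem one_add_div_sq_le {c x : ℝ} (hc : 0 < c) (hcx : c ≤ x) :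
    1 + κ / x ^ 2 ≤ 1 + |κ| / c ^ 2 := by
  gcongr 1 + ?_
  calc κ / x ^ 2 ≤ |κ| / x ^ 2 := by gcongr; exact le_abs_self κ
    _ ≤ |κ| / c ^ 2 := by gcongr

theorem strictMonoOn_one_add_div_sq (hκ : κ < 0) :
    StrictMonoOn (fun x : ℝ => 1 + κ / x ^ 2) (Ioi 0) := fun x hx y _ hxy => by
  have hx : 0 < x := hx
  have h := div_lt_div_of_pos_left (neg_pos.2 hκ) (by positivity : 0 < x ^ 2)
    (by gcongr : x ^ 2 < y ^ 2)
  rw [neg_div, neg_div] at h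
  simp only [add_lt_add_iff_left]
  linarith

theorem strictAntiOn_one_add_div_sq (hκ : 0 < κ) :
    StrictAntiOn (fun x : ℝ => 1 + κ / x ^ 2) (Ioi 0) := fun x hx y _ hxy => by
  have hx : 0 < x := hx
  simp only [add_lt_add_iff_left]
  exact div_lt_div_of_pos_left hκ (by positivity) (by gcongr)

end Potential

structure EnumeratesPosZeros (u : ℝ → ℝ) (j : ℕ → ℝ) : Prop where
  strictMonoOn : StrictMonoOn j (Ici 1)
  pos : ∀ n, 1 ≤ n → 0 < j n
  apply_eq_zero : ∀ n, 1 ≤ n → u (j n) = 0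
  exists_eq : ∀ x, 0 < x → u x = 0 → ∃ n, 1 ≤ n ∧ j n = x

namespace EnumeratesPosZeros

variable {q u u' : ℝ → ℝ} {j : ℕ → ℝ} {n : ℕ} {L : ℝ}

theorem lt_succ (hj : EnumeratesPosZeros u j) (hn : 1 ≤ n) : j n < j (n + 1) :=
  hj.strictMonoOn hn (mem_Ici.2 (by omega)) n.lt_succ_self

theorem succ_le_of_apply_eq_zero (hj : EnumeratesPosZeros u j) (hn : 1 ≤ n) {x : ℝ}
    (hx : j n < x) (hux : u x = 0) : j (n + 1) ≤ x := by
  obtain ⟨m, hm, rfl⟩ := hj.exists_eq x ((hj.pos n hn).trans hx) hux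
  have hnm : n < m := (hj.strictMonoOn.lt_iff_lt hn hm).1 hx
  exact (hj.strictMonoOn.le_iff_le (mem_Ici.2 (by omega)) hm).2 hnm

theorem apply_ne_zero (hj : EnumeratesPosZeros u j) (hn : 1 ≤ n) {x : ℝ}
    (hx : x ∈ Ioo (j n) (j (n + 1))) : u x ≠ 0 :=
  fun hux => (hj.succ_le_of_apply_eq_zero hn hx.1 hux).not_gt hx.2

theorem Icc_subset_Ioi (hj : EnumeratesPosZeros u j) (hn : 1 ≤ n) {b : ℝ} :
    Icc (j n) b ⊆ Ioi 0 :=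
  fun _ hx => (hj.pos n hn).trans_le hx.1

theorem lt_gap (hj : EnumeratesPosZeros u j) (hu : IsSturmSolution q (Ioi 0) u u')
    (hn : 1 ≤ n) (hL : 0 < L) (hq : ∀ x ∈ Ioo (j n) (j (n + 1)), q x < (π / L) ^ 2) :
    L < j (n + 1) - j n :=
  (hu.mono (hj.Icc_subset_Ioi hn)).lt_sub_of_lt_pi_div_sq (hj.lt_succ hn) (hj.apply_eq_zero n hn)
    (hj.apply_eq_zero (n + 1) (by omega)) (fun _ hx => hj.apply_ne_zero hn hx) hL hq

theorem gap_lt (hj : EnumeratesPosZeros u j) (hu : IsSturmSolution q (Ioi 0) u u')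
    (hn : 1 ≤ n) (hL : 0 < L) (hq : ∀ x ∈ Ioo (j n) (j n + L), (π / L) ^ 2 < q x) :
    j (n + 1) - j n < L := by
  obtain ⟨x, hx, hux⟩ := (hu.mono (hj.Icc_subset_Ioi hn)).exists_zero_of_pi_div_sq_lt hL hq
  linarith [hj.succ_le_of_apply_eq_zero hn hx.1 hux, hx.2]

theorem tendsto_atTop (hj : EnumeratesPosZeros u j) (hu : IsSturmSolution q (Ioi 0) u u')
    {M : ℝ} (hqM : ∀ x, j 1 < x → q x ≤ M) : Tendsto j atTop atTop := by
  set L := π / √(|M| + 1)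
  have hL : 0 < L := by positivity
  have hgap (n : ℕ) (hn : 1 ≤ n) : L < j (n + 1) - j n := by
    refine hj.lt_gap hu hn hL fun x hx => ?_
    have hj1 : j 1 ≤ j n := hj.strictMonoOn.monotoneOn (mem_Ici.2 le_rfl) hn hn
    rw [div_div_cancel₀ pi_ne_zero, sq_sqrt (by positivity)]
    linarith [hqM x (hj1.trans_lt hx.1), le_abs_self M]
  have hlin (n : ℕ) : j 1 + n * L ≤ j (n + 1) := by
    induction n with
    | zero => simp
    | succ n ih => push_cast; linarith [hgap (n + 1) (by omega)]
  refine (tendsto_add_atTop_iff_nat 1).1 (tendsto_atTop_mono hlin ?_)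
  exact tendsto_atTop_add_const_left _ _ (tendsto_natCast_atTop_atTop.atTop_mul_const hL)

theorem tendsto_gap (hj : EnumeratesPosZeros u j) (hu : IsSturmSolution q (Ioi 0) u u')
    (hq : Tendsto q atTop (𝓝 1)) (hjt : Tendsto j atTop atTop) :
    Tendsto (fun n => j (n + 1) - j n) atTop (𝓝 π) := by
  refine tendsto_order.2 ⟨fun l hl => ?_, fun r hr => ?_⟩
  · rcases le_or_gt l 0 with hl0 | hl0
    · filter_upwards [eventually_ge_atTop 1] with n hn
      linarith [hj.lt_succ hn]
    have h1 : 1 < (π / l) ^ 2 := one_lt_pow₀ ((one_lt_div hl0).2 hl) two_ne_zero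
    obtain ⟨A, hA⟩ := eventually_atTop.1 (hq.eventually (gt_mem_nhds h1))
    filter_upwards [hjt.eventually_ge_atTop A, eventually_ge_atTop 1] with n hjn hn
    exact hj.lt_gap hu hn hl0 fun x hx => hA x (hjn.trans hx.1.le)
  · have hr0 : 0 < r := pi_pos.trans hr
    have h1 : (π / r) ^ 2 < 1 :=
      pow_lt_one₀ (by positivity) ((div_lt_one hr0).2 hr) two_ne_zero
    obtain ⟨A, hA⟩ := eventually_atTop.1 (hq.eventually (lt_mem_nhds h1))
    filter_upwards [hjt.eventually_ge_atTop A, eventually_ge_atTop 1] with n hjn hn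
    exact hj.gap_lt hu hn hr0 fun x hx => hA x (hjn.trans hx.1.le)

theorem strictAntiOn_gap (hj : EnumeratesPosZeros u j)
    (hu : IsSturmSolution q (Ioi 0) u u') (hq : StrictMonoOn q (Ioi 0)) :
    StrictAntiOn (fun n => j (n + 1) - j n) (Ici 1) := by
  refine strictAntiOn_of_add_one_lt ordConnected_Ici fun n _ (hn : 1 ≤ n) _ => ?_
  -- The translate `u (· - δ)` has consecutive zeros `j (n + 1)`, `j (n + 1) + δ` and the smaller
  -- potential, so `u` vanishes strictly between them.
  set δ := j (n + 1) - j n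
  have hδ : 0 < δ := sub_pos.2 (hj.lt_succ hn)
  obtain ⟨x, hx, hux⟩ := sturm_comparison (by linarith : j (n + 1) < j (n + 1) + δ)
    ((hu.comp_sub δ).mono fun y hy => show 0 < y - δ by linarith [hy.1, hj.pos n hn])
    (hu.mono (hj.Icc_subset_Ioi (by omega)))
    (fun y hy => hq (show 0 < y - δ by linarith [hy.1, hj.pos n hn])
      (show 0 < y by linarith [hy.1, hj.pos n hn]) (by linarith))
    (by simp [δ, hj.apply_eq_zero n hn]) (by simp [hj.apply_eq_zero (n + 1) (by omega)])
    fun y hy => hj.apply_ne_zero hn ⟨by linarith [hy.1], by linarith [hy.2]⟩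
  have := hj.succ_le_of_apply_eq_zero (by omega) hx.1 hux
  linarith [hx.2]

theorem strictMonoOn_gap (hj : EnumeratesPosZeros u j)
    (hu : IsSturmSolution q (Ioi 0) u u') (hq : StrictAntiOn q (Ioi 0)) :
    StrictMonoOn (fun n => j (n + 1) - j n) (Ici 1) := by
  refine strictMonoOn_of_lt_add_one ordConnected_Ici fun n _ (hn : 1 ≤ n) _ => ?_
  -- The translate `u (· - δ)` has the larger potential, so it vanishes strictly between
  -- `j (n + 1)` and `j (n + 2)`.
  set δ := j (n + 1) - j n
  have hδ : 0 < δ := sub_pos.2 (hj.lt_succ hn)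
  obtain ⟨x, hx, hux⟩ := sturm_comparison (hj.lt_succ (by omega : 1 ≤ n + 1))
    (hu.mono (hj.Icc_subset_Ioi (by omega)))
    ((hu.comp_sub δ).mono fun y hy => show 0 < y - δ by linarith [hy.1, hj.pos n hn])
    (fun y hy => hq (show 0 < y - δ by linarith [hy.1, hj.pos n hn])
      (show 0 < y by linarith [hy.1, hj.pos n hn]) (by linarith))
    (hj.apply_eq_zero (n + 1) (by omega)) (hj.apply_eq_zero (n + 2) (by omega))
    fun y hy => hj.apply_ne_zero (by omega) hy
  have := hj.succ_le_of_apply_eq_zero hn (by linarith [hx.1] : j n < x - δ) hux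
  linarith [hx.2]

theorem gap_eq_pi (hj : EnumeratesPosZeros u j) (hu : IsSturmSolution q (Ioi 0) u u')
    (hq : ∀ x > 0, q x = 1) (hn : 1 ≤ n) : j (n + 1) - j n = π := by
  have hu1 : IsSturmSolution (fun _ => 1) (Ioi 0) u u' := fun x hx => by
    simpa [hq x hx] using hu x hx
  have hsol {x : ℝ} (hx : 0 < x) : u x = u' (j n) * sin (x - j n) :=
    hu1.eq_mul_sin isOpen_Ioi isPreconnected_Ioi (hj.pos n hn) (hj.apply_eq_zero n hn) hx
  have hjn := hj.pos n hn
  have hlt := hj.lt_succ hn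
  have hA : u' (j n) ≠ 0 := fun hA => hj.apply_ne_zero hn (x := (j n + j (n + 1)) / 2)
    ⟨by linarith, by linarith⟩ (by rw [hsol (by linarith), hA, zero_mul])
  have hle : j (n + 1) ≤ j n + π := hj.succ_le_of_apply_eq_zero hn (by linarith [pi_pos])
    (by rw [hsol (by linarith [pi_pos]), add_sub_cancel_left, sin_pi, mul_zero])
  have hge : j n + π ≤ j (n + 1) := by
    by_contra! h
    have h0 := hj.apply_eq_zero (n + 1) (by omega)
    rw [hsol (by linarith)] at h0
    exact mul_ne_zero hA (sin_pos_of_pos_of_lt_pi (by linarith) (by linarith)).ne' h0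
  linarith

end EnumeratesPosZeros

/-- For the positive zeros `j₁ < j₂ < ⋯` of the Bessel function `J_ν` (ν > −1),
the difference sequence `(j_{n+1} − j_n)` converges to π; it is strictly decreasing if
`|ν| > 1/2`, strictly increasing if `|ν| < 1/2`, and constant if `|ν| = 1/2`. -/
theorem bessel_zero_gaps
    (ν : ℝ) (hν : -1 < ν)
    (J : ℝ → ℝ)
    (hJ : ∀ x : ℝ, 0 < x →
      J x = ∑' m : ℕ, ((-1 : ℝ) ^ m / (m.factorial * Real.Gamma (1 + ν + m))) *
        (x / 2) ^ (2 * (m : ℝ) + ν))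
    (j : ℕ → ℝ)
    (hmono : ∀ n, 1 ≤ n → ∀ m, 1 ≤ m → n < m → j n < j m)
    (hpos : ∀ n, 1 ≤ n → 0 < j n)
    (hzero : ∀ n, 1 ≤ n → J (j n) = 0)
    (hall : ∀ x : ℝ, 0 < x → J x = 0 → ∃ n, 1 ≤ n ∧ j n = x) :
    Tendsto (fun n : ℕ => j (n + 1) - j n) atTop (nhds Real.pi) ∧
    (1 / 2 < |ν| → ∀ n, 1 ≤ n → ∀ m, 1 ≤ m → n < m →
      j (m + 1) - j m < j (n + 1) - j n) ∧
    (|ν| < 1 / 2 → ∀ n, 1 ≤ n → ∀ m, 1 ≤ m → n < m →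
      j (n + 1) - j n < j (m + 1) - j m) ∧
    (|ν| = 1 / 2 → ∀ n, 1 ≤ n → ∀ m, 1 ≤ m →
      j (n + 1) - j n = j (m + 1) - j m) := by
  have hκ : (ν + 1 / 2) * (1 - (ν + 1 / 2)) = 1 / 4 - |ν| ^ 2 := by rw [sq_abs]; ring
  have hu := isSturmSolution_rpow_mul (α := ν + 1 / 2)
    (fun x _ => hasDerivAt_besselEntire hν x) (fun x hx => hasDerivAt_besselEntireDeriv hν hx.ne')
  have hJ_eq_zero {x : ℝ} (hx : 0 < x) :
      J x = 0 ↔ x ^ (ν + 1 / 2) * besselEntire ν x = 0 := by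
    rw [(hJ x hx).trans (tsum_besselCoeff_mul_rpow ν hx), mul_eq_zero, mul_eq_zero,
      or_iff_right (rpow_pos_of_pos (by positivity) _).ne', or_iff_right (rpow_pos_of_pos hx _).ne']
  have hj : EnumeratesPosZeros (fun x => x ^ (ν + 1 / 2) * besselEntire ν x) j :=
    ⟨hmono, hpos, fun n hn => (hJ_eq_zero (hpos n hn)).1 (hzero n hn),
      fun x hx hux => hall x hx ((hJ_eq_zero hx).2 hux)⟩
  refine ⟨hj.tendsto_gap hu tendsto_one_add_div_sq
      (hj.tendsto_atTop hu fun x hx => one_add_div_sq_le (hpos 1 le_rfl) hx.le),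
    fun h => ?_, fun h => ?_, fun h n hn m hm => ?_⟩
  · exact hj.strictAntiOn_gap hu
      (strictMonoOn_one_add_div_sq (by rw [hκ]; nlinarith [abs_nonneg ν]))
  · exact hj.strictMonoOn_gap hu
      (strictAntiOn_one_add_div_sq (by rw [hκ]; nlinarith [abs_nonneg ν]))
  have hq (x : ℝ) (_ : x > 0) : 1 + (ν + 1 / 2) * (1 - (ν + 1 / 2)) / x ^ 2 = 1 := by
    rw [hκ, h]; norm_num
  rw [hj.gap_eq_pi hu hq hn, hj.gap_eq_pi hu hq hm]
end
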